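/- Let B and C be unital C*-algebras, let π : B → C be a surjective unital *-homomorphism, let x_1, …, x_n ∈ B, let c ∈ C, and let ε > 0. Then there exists b ∈ B with π(b) = c, ‖b‖ ≤ ‖c‖ + ε, and ‖b x_i − x_i b‖ ≤ ‖c · π(x_i) − π(x_i) · c‖ + ε for all i = 1, …, n. -/

import Mathlib

/-!
Lift `c` to `d` with `‖d‖ ≤ ‖c‖ + ε/2` and each commutator `c π(xᵢ) - π(xᵢ) c` to some `dᵢ` with
almost the same norm, so that `jᵢ = [d, xᵢ] - dᵢ` lies in `ker π`. For `e ∈ ker π` with `0 ≤ e ≤ 1`,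
`(1 - e) jᵢ ≈ 0` and `[e, xᵢ] ≈ 0`, the element `b = (1 - e) d (1 - e)` works, because
`[b, xᵢ] ≈ (1 - e) (dᵢ + jᵢ) (1 - e)`.

Such a quasicentral `e` is an average `N⁻¹ ∑ Eₖ` of approximate units `Eₖ = f(∑ a a*)` for finite
sets chosen recursively so that `Eₗ` almost fixes `[Eₖ, x]` and `x* [Eₖ, x]` whenever `k < l`.
The commutators `[Eₖ, x]` are then almost orthogonal, so `‖∑ₖ [Eₖ, x]‖² ≤ 4N‖x‖² + N² · small`
and the averaged commutator has norm `O(N^{-1/2}) + small`. Lifts of almost the same norm are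
`a g(a* a)` with `g t = r² / max t r²`, which is `1` on the spectrum of `π (a* a)`.
-/

open Finset
open scoped CStarAlgebra

section NormedRing

variable {A : Type*} [NormedRing A]

lemma norm_mul_mul_le_of_norm_le_one {u : A} (hu : ‖u‖ ≤ 1) (a : A) : ‖u * a * u‖ ≤ ‖a‖ :=
  calc ‖u * a * u‖ ≤ ‖u‖ * ‖a‖ * ‖u‖ := norm_mul₃_le
    _ ≤ 1 * ‖a‖ * 1 := by gcongr
    _ = ‖a‖ := by ring

lemma norm_commutator_le (e x : A) : ‖e * x - x * e‖ ≤ 2 * ‖e‖ * ‖x‖ :=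
  calc ‖e * x - x * e‖ ≤ ‖e‖ * ‖x‖ + ‖x‖ * ‖e‖ :=
        (norm_sub_le _ _).trans (add_le_add (norm_mul_le _ _) (norm_mul_le _ _))
    _ = 2 * ‖e‖ * ‖x‖ := by ring

lemma norm_conj_commutator_le {u : A} (hu : ‖u‖ ≤ 1) (d x : A) :
    ‖u * d * u * x - x * (u * d * u)‖ ≤
      ‖u * (d * x - x * d) * u‖ + 2 * ‖d‖ * ‖u * x - x * u‖ := by
  have h : u * d * u * x - x * (u * d * u) =
      u * (d * x - x * d) * u + (u * d) * (u * x - x * u) + (u * x - x * u) * (d * u) := by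
    noncomm_ring
  have hud : ‖u * d‖ ≤ ‖d‖ := (norm_mul_le _ _).trans (mul_le_of_le_one_left (norm_nonneg d) hu)
  have hdu : ‖d * u‖ ≤ ‖d‖ := (norm_mul_le _ _).trans (mul_le_of_le_one_right (norm_nonneg d) hu)
  rw [h]
  calc _ ≤ ‖u * (d * x - x * d) * u‖ + ‖u * d‖ * ‖u * x - x * u‖ + ‖u * x - x * u‖ * ‖d * u‖ :=
        norm_add₃_le.trans (add_le_add_three le_rfl (norm_mul_le _ _) (norm_mul_le _ _))
    _ ≤ ‖u * (d * x - x * d) * u‖ + ‖d‖ * ‖u * x - x * u‖ + ‖u * x - x * u‖ * ‖d‖ := by gcongr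
    _ = ‖u * (d * x - x * d) * u‖ + 2 * ‖d‖ * ‖u * x - x * u‖ := by ring

variable [StarRing A] [NormedStarGroup A]

lemma norm_star_mul_commutator_le {f : A} (hf : IsSelfAdjoint f) (x y : A) :
    ‖star y * (f * x - x * f)‖ ≤ ‖(1 - f) * y‖ * ‖x‖ + ‖(1 - f) * (star x * y)‖ := by
  have h : star y * (f * x - x * f) =
      -(star ((1 - f) * y) * x) + star ((1 - f) * (star x * y)) := by
    simp only [star_mul, star_sub, star_one, hf.star_eq, star_star]
    noncomm_ring
  rw [h]
  refine (norm_add_le _ _).trans (add_le_add ?_ (norm_star _).le)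
  rw [norm_neg]
  exact (norm_mul_le _ _).trans (by rw [norm_star])

end NormedRing

lemma sq_norm_sum_le_of_norm_star_mul_le {A : Type*} [NonUnitalNormedRing A] [StarRing A]
    [CStarRing A] (z : ℕ → A) {M t : ℝ} (hM : ∀ k, ‖z k‖ ≤ M)
    (ht : ∀ k l, k < l → ‖star (z k) * z l‖ ≤ t) (N : ℕ) :
    ‖∑ k ∈ range N, z k‖ ^ 2 ≤ N * M ^ 2 + N ^ 2 * t := by
  have ht0 : 0 ≤ t := (norm_nonneg _).trans (ht 0 1 one_pos)
  have hterm : ∀ k l, ‖star (z k) * z l‖ ≤ (if k = l then M ^ 2 else 0) + t := by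
    intro k l
    rcases lt_trichotomy k l with hkl | rfl | hlk
    · simpa [hkl.ne] using ht k l hkl
    · rw [if_pos rfl, CStarRing.norm_star_mul_self, ← sq]
      nlinarith [hM k, norm_nonneg (z k)]
    · rw [← norm_star, star_mul, star_star]
      simpa [hlk.ne'] using ht l k hlk
  calc ‖∑ k ∈ range N, z k‖ ^ 2
      = ‖∑ k ∈ range N, ∑ l ∈ range N, star (z k) * z l‖ := by
        rw [sq, ← CStarRing.norm_star_mul_self, star_sum, sum_mul_sum]
    _ ≤ ∑ k ∈ range N, ∑ l ∈ range N, ((if k = l then M ^ 2 else 0) + t) :=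
        (norm_sum_le _ _).trans (sum_le_sum fun k _ => (norm_sum_le _ _).trans
          (sum_le_sum fun l _ => hterm k l))
    _ = N * M ^ 2 + N ^ 2 * t := by
        rw [sum_congr rfl fun k hk => by rw [sum_add_distrib, sum_ite_eq, if_pos hk]]
        simp only [sum_add_distrib, sum_const, card_range, nsmul_eq_mul]
        ring

section CStarAlgebra

variable {A : Type*} [CStarAlgebra A]

lemma cfc_mul_self_mul_cfc (f : ℝ → ℝ) (a : A)
    (hf : ContinuousOn f (spectrum ℝ a) := by cfc_cont_tac)
    (ha : IsSelfAdjoint a := by cfc_tac) :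
    cfc f a * a * cfc f a = cfc (fun t => f t * t * f t) a := by
  rw [cfc_mul (fun t => f t * t) f a, cfc_mul f (fun t => t) a, cfc_id' ℝ a]

lemma one_sub_average (E : ℕ → A) {N : ℕ} (hN : N ≠ 0) :
    1 - (N : ℝ)⁻¹ • ∑ k ∈ range N, E k = (N : ℝ)⁻¹ • ∑ k ∈ range N, (1 - E k) := by
  rw [sum_sub_distrib, smul_sub, sum_const, card_range, ← Nat.cast_smul_eq_nsmul ℝ, smul_smul,
    inv_mul_cancel₀ (Nat.cast_ne_zero.2 hN), one_smul]

lemma norm_average_mul_le (E : ℕ → A) (a : A) {t : ℝ} (ht : ∀ k, ‖E k * a‖ ≤ t) {N : ℕ}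
    (hN : N ≠ 0) : ‖((N : ℝ)⁻¹ • ∑ k ∈ range N, E k) * a‖ ≤ t := by
  rw [smul_mul_assoc, sum_mul, norm_smul, norm_inv, Real.norm_natCast,
    inv_mul_le_iff₀ (Nat.cast_pos.2 (Nat.pos_of_ne_zero hN))]
  calc ‖∑ k ∈ range N, E k * a‖ ≤ ∑ k ∈ range N, t := norm_sum_le_of_le _ fun k _ => ht k
    _ = N * t := by rw [sum_const, card_range, nsmul_eq_mul]

lemma sq_norm_commutator_average_le (E : ℕ → A) (hE : ∀ k, ‖E k‖ ≤ 1)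
    (hE_sa : ∀ k, IsSelfAdjoint (E k)) (x : A) {t : ℝ}
    (ht : ∀ k l, k < l → ‖(1 - E l) * (E k * x - x * E k)‖ ≤ t ∧
      ‖(1 - E l) * (star x * (E k * x - x * E k))‖ ≤ t) {N : ℕ} (hN : N ≠ 0) :
    ‖((N : ℝ)⁻¹ • ∑ k ∈ range N, E k) * x - x * ((N : ℝ)⁻¹ • ∑ k ∈ range N, E k)‖ ^ 2 ≤
      4 * ‖x‖ ^ 2 / N + (‖x‖ + 1) * t := by
  set z : ℕ → A := fun k => E k * x - x * E k
  have hz : ∀ k, ‖z k‖ ≤ 2 * ‖x‖ := fun k =>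
    (norm_commutator_le _ _).trans (by nlinarith [hE k, norm_nonneg x])
  have hcross : ∀ k l, k < l → ‖star (z k) * z l‖ ≤ (‖x‖ + 1) * t := fun k l hkl =>
    (norm_star_mul_commutator_le (hE_sa l) x (z k)).trans (by nlinarith [ht k l hkl, norm_nonneg x])
  have hcomm : ((N : ℝ)⁻¹ • ∑ k ∈ range N, E k) * x - x * ((N : ℝ)⁻¹ • ∑ k ∈ range N, E k) =
      (N : ℝ)⁻¹ • ∑ k ∈ range N, z k := by
    rw [smul_mul_assoc, mul_smul_comm, ← smul_sub, sum_mul, mul_sum, ← sum_sub_distrib]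
  have hNpos : (0 : ℝ) < N := Nat.cast_pos.2 (Nat.pos_of_ne_zero hN)
  rw [hcomm, norm_smul, mul_pow, norm_inv, Real.norm_natCast]
  calc (N : ℝ)⁻¹ ^ 2 * ‖∑ k ∈ range N, z k‖ ^ 2
      ≤ (N : ℝ)⁻¹ ^ 2 * (N * (2 * ‖x‖) ^ 2 + N ^ 2 * ((‖x‖ + 1) * t)) := by
        gcongr; exact sq_norm_sum_le_of_norm_star_mul_le z hz hcross N
    _ = 4 * ‖x‖ ^ 2 / N + (‖x‖ + 1) * t := by field_simp; ring

variable [PartialOrder A] [StarOrderedRing A]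

lemma sq_norm_mul_le_of_mul_star_le {u a h : A} (hu : IsSelfAdjoint u) (hah : a * star a ≤ h) :
    ‖u * a‖ ^ 2 ≤ ‖u * h * u‖ := by
  have hconj : u * (a * star a) * u = (u * a) * star (u * a) := by
    rw [star_mul, hu.star_eq]; noncomm_ring
  rw [sq, ← CStarRing.norm_self_mul_star, ← hconj]
  refine CStarAlgebra.norm_le_norm_of_nonneg_of_le ?_ (hu.conjugate_le_conjugate hah)
  rw [hconj]; exact mul_star_self_nonneg _

lemma exists_approxUnit_of_nonneg {h : A} (hh : 0 ≤ h) {η : ℝ} (hη : 0 < η) :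
    ∃ e k : A, e = h * k ∧ 0 ≤ e ∧ e ≤ 1 ∧ ‖(1 - e) * h * (1 - e)‖ ≤ η ^ 2 := by
  have hspec : ∀ t ∈ spectrum ℝ h, 0 ≤ t := fun t ht => spectrum_nonneg_of_nonneg hh ht
  have hpos : ∀ t ∈ spectrum ℝ h, 0 < η ^ 2 + t := fun t ht => by positivity [hspec t ht]
  have hinv : ContinuousOn (fun t => (η ^ 2 + t)⁻¹) (spectrum ℝ h) :=
    (continuousOn_const.add continuousOn_id).inv₀ fun t ht => (hpos t ht).ne'
  have hf : ContinuousOn (fun t => t * (η ^ 2 + t)⁻¹) (spectrum ℝ h) := continuousOn_id.mul hinv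
  have hu : 1 - cfc (fun t => t * (η ^ 2 + t)⁻¹) h = cfc (fun t => η ^ 2 * (η ^ 2 + t)⁻¹) h := by
    rw [← cfc_const_one ℝ h, ← cfc_sub _ _ h continuousOn_const hf]
    refine cfc_congr fun t ht => ?_
    field_simp [(hpos t ht).ne']
    ring
  refine ⟨_, cfc (fun t => (η ^ 2 + t)⁻¹) h,
    by rw [cfc_mul (fun t => t) _ h continuousOn_id hinv, cfc_id' ℝ h],
    cfc_nonneg fun t ht => mul_nonneg (hspec t ht) (inv_nonneg.2 (hpos t ht).le),
    cfc_le_one _ _ fun t ht => ?_, ?_⟩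
  · rw [← div_eq_mul_inv, div_le_one (hpos t ht)]
    linarith [sq_nonneg η]
  rw [hu, cfc_mul_self_mul_cfc (fun t => η ^ 2 * (η ^ 2 + t)⁻¹) h (continuousOn_const.mul hinv)]
  refine norm_cfc_le (by positivity) fun t ht => ?_
  have := hspec t ht
  have := hpos t ht
  have key : η ^ 2 * t ≤ (η ^ 2 + t) ^ 2 := by nlinarith
  rw [Real.norm_of_nonneg (by positivity)]
  calc _ = η ^ 2 * (η ^ 2 * t / (η ^ 2 + t) ^ 2) := by field_simp
    _ ≤ η ^ 2 * 1 := by gcongr; exact (div_le_one (by positivity)).2 key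
    _ = η ^ 2 := mul_one _

theorem exists_mem_span_approxUnit (s : Finset A) {η : ℝ} (hη : 0 < η) :
    ∃ e ∈ TwoSidedIdeal.span (s : Set A), 0 ≤ e ∧ e ≤ 1 ∧ ∀ a ∈ s, ‖(1 - e) * a‖ ≤ η := by
  have hle : ∀ a ∈ s, a * star a ≤ ∑ a ∈ s, a * star a := fun a ha =>
    single_le_sum (fun b _ => mul_star_self_nonneg (b : A)) ha
  have hh : 0 ≤ ∑ a ∈ s, a * star a := sum_nonneg fun a _ => mul_star_self_nonneg a
  obtain ⟨e, k, he, he0, he1, hconj⟩ := exists_approxUnit_of_nonneg hh hη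
  have hmem : ∑ a ∈ s, a * star a ∈ TwoSidedIdeal.span (s : Set A) :=
    sum_mem fun a ha => TwoSidedIdeal.mul_mem_right _ _ _ (TwoSidedIdeal.subset_span ha)
  have hu := (IsSelfAdjoint.one A).sub (IsSelfAdjoint.of_nonneg he0)
  refine ⟨e, he ▸ TwoSidedIdeal.mul_mem_right _ _ _ hmem, he0, he1, fun a ha => ?_⟩
  exact (pow_le_pow_iff_left₀ (norm_nonneg _) hη.le two_ne_zero).1
    ((sq_norm_mul_le_of_mul_star_le hu (hle a ha)).trans hconj)

namespace Quasicentral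

noncomputable def approxUnit {η : ℝ} (hη : 0 < η) (s : Finset A) : A :=
  (exists_mem_span_approxUnit s hη).choose

lemma approxUnit_spec {η : ℝ} (hη : 0 < η) (s : Finset A) :
    approxUnit hη s ∈ TwoSidedIdeal.span (s : Set A) ∧ 0 ≤ approxUnit hη s ∧
      approxUnit hη s ≤ 1 ∧ ∀ a ∈ s, ‖(1 - approxUnit hη s) * a‖ ≤ η :=
  (exists_mem_span_approxUnit s hη).choose_spec

open Classical in
noncomputable def commutatorTargets (X : Finset A) (e : A) : Finset A :=
  X.image (fun x => e * x - x * e) ∪ X.image (fun x => star x * (e * x - x * e))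

open Classical in
noncomputable def targets {η : ℝ} (hη : 0 < η) (J X : Finset A) : ℕ → Finset A
  | 0 => J
  | k + 1 => targets hη J X k ∪ commutatorTargets X (approxUnit hη (targets hη J X k))

noncomputable def unit {η : ℝ} (hη : 0 < η) (J X : Finset A) (k : ℕ) : A :=
  approxUnit hη (targets hη J X k)

variable {η : ℝ} (hη : 0 < η) (J X : Finset A)

lemma targets_mono : Monotone (targets hη J X) := by
  classical
  exact monotone_nat_of_le_succ fun _ => subset_union_left

lemma subset_targets (k : ℕ) : J ⊆ targets hη J X k :=
  targets_mono hη J X (Nat.zero_le k)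

lemma commutator_mem_targets {k l : ℕ} (hlk : l < k) {x : A} (hx : x ∈ X) :
    unit hη J X l * x - x * unit hη J X l ∈ targets hη J X k ∧
      star x * (unit hη J X l * x - x * unit hη J X l) ∈ targets hη J X k := by
  classical
  have hsub := targets_mono hη J X (Nat.succ_le_of_lt hlk)
  exact ⟨hsub (mem_union_right _ (mem_union_left _ (mem_image_of_mem _ hx))),
    hsub (mem_union_right _ (mem_union_right _ (mem_image_of_mem _ hx)))⟩

lemma unit_nonneg (k : ℕ) : 0 ≤ unit hη J X k := (approxUnit_spec hη _).2.1

lemma unit_le_one (k : ℕ) : unit hη J X k ≤ 1 := (approxUnit_spec hη _).2.2.1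

lemma norm_one_sub_unit_mul_le {k : ℕ} {a : A} (ha : a ∈ targets hη J X k) :
    ‖(1 - unit hη J X k) * a‖ ≤ η :=
  (approxUnit_spec hη _).2.2.2 a ha

lemma unit_mem_span (k : ℕ) : unit hη J X k ∈ TwoSidedIdeal.span (J : Set A) := by
  suffices h : ∀ k, TwoSidedIdeal.span (targets hη J X k : Set A) ≤ TwoSidedIdeal.span J from
    h k (approxUnit_spec hη _).1
  intro k
  induction k with
  | zero => exact le_rfl
  | succ k ih =>
    have he := ih (approxUnit_spec hη (targets hη J X k)).1
    rw [TwoSidedIdeal.span_le]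
    intro a ha
    simp only [targets, commutatorTargets, coe_union, coe_image, Set.mem_union, Set.mem_image] at ha
    rcases ha with ha | ⟨x, -, rfl⟩ | ⟨x, -, rfl⟩
    · exact ih (TwoSidedIdeal.subset_span ha)
    · exact sub_mem (TwoSidedIdeal.mul_mem_right _ _ _ he) (TwoSidedIdeal.mul_mem_left _ _ _ he)
    · exact TwoSidedIdeal.mul_mem_left _ _ _
        (sub_mem (TwoSidedIdeal.mul_mem_right _ _ _ he) (TwoSidedIdeal.mul_mem_left _ _ _ he))

end Quasicentral

open Quasicentral in
theorem exists_quasicentral_approxUnit (J X : Finset A) {δ : ℝ} (hδ : 0 < δ) :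
    ∃ e ∈ TwoSidedIdeal.span (J : Set A), 0 ≤ e ∧ e ≤ 1 ∧
      (∀ j ∈ J, ‖(1 - e) * j‖ ≤ δ) ∧ ∀ x ∈ X, ‖e * x - x * e‖ ≤ δ := by
  set R := ∑ x ∈ X, ‖x‖
  have hR : 0 ≤ R := sum_nonneg fun x _ => norm_nonneg x
  have hxR : ∀ x ∈ X, ‖x‖ ≤ R := fun x hx => single_le_sum (fun y _ => norm_nonneg y) hx
  set t := min δ (δ ^ 2 / (2 * (R + 1)))
  have ht : 0 < t := lt_min hδ (by positivity)
  set N := ⌈8 * R ^ 2 / δ ^ 2⌉₊ + 1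
  have hN : N ≠ 0 := Nat.succ_ne_zero _
  have hNpos : (0 : ℝ) < N := Nat.cast_pos.2 (Nat.pos_of_ne_zero hN)
  have hNR : 8 * R ^ 2 ≤ N * δ ^ 2 :=
    (div_le_iff₀ (by positivity)).1 ((Nat.le_ceil _).trans (by simp [N]))
  set E := unit ht J X
  refine ⟨(N : ℝ)⁻¹ • ∑ k ∈ range N, E k, ?_, ?_, ?_, fun j hj => ?_, fun x hx => ?_⟩
  · rw [Algebra.smul_def]
    exact TwoSidedIdeal.mul_mem_left _ _ _ (sum_mem fun k _ => unit_mem_span ht J X k)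
  · exact smul_nonneg (by positivity) (sum_nonneg fun k _ => unit_nonneg ht J X k)
  · rw [← sub_nonneg, one_sub_average E hN]
    exact smul_nonneg (by positivity) (sum_nonneg fun k _ => sub_nonneg.2 (unit_le_one ht J X k))
  · rw [one_sub_average E hN]
    exact norm_average_mul_le _ j (fun k =>
      (norm_one_sub_unit_mul_le ht J X (subset_targets ht J X k hj)).trans (min_le_left _ _)) hN
  have hsq := sq_norm_commutator_average_le E
    (fun k => (CStarAlgebra.norm_le_one_iff_of_nonneg _ (unit_nonneg ht J X k)).2
      (unit_le_one ht J X k))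
    (fun k => IsSelfAdjoint.of_nonneg (unit_nonneg ht J X k)) x
    (fun k l hkl => ⟨norm_one_sub_unit_mul_le ht J X (commutator_mem_targets ht J X hkl hx).1,
      norm_one_sub_unit_mul_le ht J X (commutator_mem_targets ht J X hkl hx).2⟩) hN
  have h1 : 4 * ‖x‖ ^ 2 / N ≤ δ ^ 2 / 2 := by
    rw [div_le_iff₀ hNpos]
    nlinarith [hxR x hx, norm_nonneg x]
  have h2 : (‖x‖ + 1) * t ≤ δ ^ 2 / 2 :=
    calc (‖x‖ + 1) * t ≤ (R + 1) * (δ ^ 2 / (2 * (R + 1))) :=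
          mul_le_mul (by linarith [hxR x hx]) (min_le_right _ _) ht.le (by positivity)
      _ = δ ^ 2 / 2 := by field_simp
  exact (pow_le_pow_iff_left₀ (norm_nonneg _) hδ.le two_ne_zero).1 (by linarith)

end CStarAlgebra

section Lifting

variable {B C : Type*} [CStarAlgebra B] [PartialOrder B] [StarOrderedRing B] [CStarAlgebra C]

theorem exists_preimage_norm_le (π : B →⋆ₐ[ℂ] C) (hπ : Function.Surjective π) {c : C} {r : ℝ}
    (hr : ‖c‖ < r) : ∃ b, π b = c ∧ ‖b‖ ≤ r := by
  obtain ⟨a, rfl⟩ := hπ c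
  have hr0 : 0 < r := (norm_nonneg _).trans_lt hr
  have hR : 0 < r ^ 2 := by positivity
  set g : ℝ → ℝ := fun t => r ^ 2 / max t (r ^ 2)
  have hg : Continuous g := continuous_const.div (continuous_id.max continuous_const)
    fun t => (hR.trans_le (le_max_right _ _)).ne'
  have hp : 0 ≤ star a * a := star_mul_self_nonneg a
  have hπg : π (cfc g (star a * a)) = 1 := by
    -- `spectrum.norm_le_norm_of_mem` needs `‖1‖ = 1`
    nontriviality C
    rw [StarAlgHom.map_cfc π g _ hg.continuousOn (map_continuous π) (.star_mul_self a)
      ((IsSelfAdjoint.star_mul_self a).map π), map_mul, map_star,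
      ← cfc_const_one ℝ (star (π a) * π a)]
    refine cfc_congr fun t ht => ?_
    have : t ≤ r ^ 2 := calc
      t ≤ ‖star (π a) * π a‖ := (Real.le_norm_self t).trans (spectrum.norm_le_norm_of_mem ht)
      _ = ‖π a‖ ^ 2 := by rw [CStarRing.norm_star_mul_self, sq]
      _ ≤ r ^ 2 := by gcongr
    simp only [g, max_eq_right this, div_self hR.ne']
  refine ⟨a * cfc g (star a * a), by rw [map_mul, hπg, mul_one], ?_⟩
  have hconj : star (a * cfc g (star a * a)) * (a * cfc g (star a * a)) =
      cfc g (star a * a) * (star a * a) * cfc g (star a * a) := by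
    rw [star_mul, (cfc_predicate g (star a * a)).star_eq]; noncomm_ring
  have hsq : ‖a * cfc g (star a * a)‖ ^ 2 ≤ r ^ 2 := by
    rw [sq, ← CStarRing.norm_star_mul_self, hconj, cfc_mul_self_mul_cfc g _ hg.continuousOn]
    refine norm_cfc_le hR.le fun t ht => ?_
    have ht0 : 0 ≤ t := spectrum_nonneg_of_nonneg hp ht
    rw [Real.norm_of_nonneg (by positivity)]
    rcases le_total t (r ^ 2) with htR | htR
    · simp only [g, max_eq_right htR, div_self hR.ne']; linarith
    · have htpos : 0 < t := hR.trans_le htR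
      simp only [g, max_eq_left htR]
      rw [div_mul_cancel₀ _ htpos.ne', ← mul_div_assoc, div_le_iff₀ htpos]
      exact mul_le_mul_of_nonneg_left htR hR.le
  exact (pow_le_pow_iff_left₀ (norm_nonneg _) hr0.le two_ne_zero).1 hsq

theorem exists_preimage_norm_le_norm_commutator_le (π : B →⋆ₐ[ℂ] C) (hπ : Function.Surjective π)
    (X : Finset B) (c : C) {ε : ℝ} (hε : 0 < ε) :
    ∃ b, π b = c ∧ ‖b‖ ≤ ‖c‖ + ε ∧ ∀ x ∈ X, ‖b * x - x * b‖ ≤ ‖c * π x - π x * c‖ + ε := by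
  classical
  obtain ⟨d, hd, hd_norm⟩ := exists_preimage_norm_le π hπ (c := c) (r := ‖c‖ + ε / 2) (by linarith)
  choose d' hd' hd'_norm using fun x => exists_preimage_norm_le π hπ
    (c := c * π x - π x * c) (r := ‖c * π x - π x * c‖ + ε / 2) (by linarith)
  set δ := ε / (2 * (1 + 2 * ‖d‖))
  have hδ : 0 < δ := by positivity
  have hδd : δ + 2 * ‖d‖ * δ = ε / 2 := by simp only [δ]; field_simp
  obtain ⟨e, he_mem, he0, he1, hJ, hX⟩ :=
    exists_quasicentral_approxUnit (X.image fun x => d * x - x * d - d' x) X hδ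
  have hπe : π e = 0 := by
    refine (TwoSidedIdeal.mem_ker π).1 (TwoSidedIdeal.span_le.2 ?_ he_mem)
    simp [Set.subset_def, TwoSidedIdeal.mem_ker, hd, hd']
  have hu : ‖1 - e‖ ≤ 1 :=
    (CStarAlgebra.norm_le_one_iff_of_nonneg _ (sub_nonneg.2 he1)).2 (sub_le_self _ he0)
  refine ⟨(1 - e) * d * (1 - e), by simp [hπe, hd], ?_, fun x hx => ?_⟩
  · linarith [norm_mul_mul_le_of_norm_le_one hu d]
  have hux : ‖(1 - e) * x - x * (1 - e)‖ = ‖e * x - x * e‖ := by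
    rw [← norm_neg]; congr 1; noncomm_ring
  have hsplit : (1 - e) * (d * x - x * d) * (1 - e) =
      (1 - e) * d' x * (1 - e) + (1 - e) * (d * x - x * d - d' x) * (1 - e) := by
    noncomm_ring
  have hj := hJ _ (mem_image_of_mem _ hx)
  calc ‖(1 - e) * d * (1 - e) * x - x * ((1 - e) * d * (1 - e))‖
      ≤ ‖(1 - e) * (d * x - x * d) * (1 - e)‖ + 2 * ‖d‖ * ‖(1 - e) * x - x * (1 - e)‖ :=
        norm_conj_commutator_le hu d x
    _ ≤ (‖d' x‖ + δ) + 2 * ‖d‖ * δ := by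
        rw [hsplit, hux]
        gcongr
        · refine (norm_add_le _ _).trans (add_le_add (norm_mul_mul_le_of_norm_le_one hu _) ?_)
          exact (norm_mul_le _ _).trans ((mul_le_of_le_one_right (norm_nonneg _) hu).trans hj)
        · exact hX x hx
    _ = ‖d' x‖ + ε / 2 := by rw [← hδd]; ring
    _ ≤ ‖c * π x - π x * c‖ + ε := by linarith [hd'_norm x]

end Lifting

/-- Elementwise quasicentral lifting: any element of a quotient lifts with almost the
same norm and with commutator norms against finitely many prescribed elements almost
equal to the corresponding commutator norms in the quotient. -/
theorem quasicentral_lifting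
    (B C : Type)
    [NormedRing B] [StarRing B] [CStarRing B] [NormedAlgebra ℂ B]
    [CompleteSpace B] [StarModule ℂ B]
    [NormedRing C] [StarRing C] [CStarRing C] [NormedAlgebra ℂ C]
    [CompleteSpace C] [StarModule ℂ C]
    (π : B →⋆ₐ[ℂ] C) (hπ : Function.Surjective π)
    (n : ℕ) (x : Fin n → B) (c : C) (ε : ℝ) (hε : 0 < ε) :
    ∃ b : B, π b = c ∧ ‖b‖ ≤ ‖c‖ + ε ∧
      ∀ i : Fin n, ‖b * x i - x i * b‖ ≤ ‖c * π (x i) - π (x i) * c‖ + ε := by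
  classical
  let _ : CStarAlgebra B := {}
  let _ : CStarAlgebra C := {}
  let _ := CStarAlgebra.spectralOrder B
  have := CStarAlgebra.spectralOrderedRing B
  obtain ⟨b, hb, hb_norm, hb_comm⟩ :=
    exists_preimage_norm_le_norm_commutator_le π hπ (univ.image x) c hε
  exact ⟨b, hb, hb_norm, fun i => hb_comm (x i) (mem_image_of_mem x (mem_univ i))⟩
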